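/- arXiv:1904.02829 — 5 statements merged into one kernel-verified Lean document; each statement's English description precedes it below -/
import Mathlib

section
/- A permutation σ satisfies: s(σ) avoids 321 if and only if σ avoids all three patterns 34251, 35241, and 45231. That is, s^{-1}(Av(321)) = Av(34251, 35241, 45231). -/
/-- West's stack-sorting map, implemented with fuel (fuel = length suffices). -/
def ssAux : ℕ → List ℕ → List ℕ
  | 0, _ => []
  | _ + 1, [] => []
  | fuel + 1, l =>
    let m := l.foldr max 0
    let i := l.idxOf m
    ssAux fuel (l.take i) ++ ssAux fuel (l.drop (i + 1)) ++ [m]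

/-- West's stack-sorting map `s`. -/
def stackSort (l : List ℕ) : List ℕ := ssAux l.length l

/-- `σ` contains the classical pattern `τ`. -/
def Contains (τ σ : List ℕ) : Prop :=
  ∃ f : Fin τ.length → Fin σ.length, StrictMono f ∧
    ∀ i j : Fin τ.length, τ.get i < τ.get j ↔ σ.get (f i) < σ.get (f j)

/-- `σ` avoids the classical pattern `τ`. -/
def Avoids (σ τ : List ℕ) : Prop := ¬ Contains τ σ

/-!
For `y < x`, the entry `x` precedes `y` in `s(σ)` exactly when some `z > x` lies between them in
`σ`: split `σ = L m R` at its maximum, so that `s(σ) = s(L) s(R) m`, and induct. A `321` pattern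
`a b c` of `s(σ)` is thus the same as entries `a z b w c` of `σ` with `c < b < a < z` and `b < w`;
the position of `w` relative to `a < z` yields exactly the patterns `45231`, `35241` and `34251`.
-/

open List

section Sublist

variable {α : Type*}

theorem cons_sublist_append_iff_of_notMem {x : α} {l A B : List α} (hx : x ∉ A) :
    x :: l <+ A ++ B ↔ x :: l <+ B := by
  refine ⟨fun h => ?_, fun h => h.trans (sublist_append_right A B)⟩
  induction A with
  | nil => exact h
  | cons a A ih =>
    cases h with
    | cons _ h => exact ih (fun hA => hx (mem_cons_of_mem a hA)) h
    | cons_cons _ h => exact absurd mem_cons_self hx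

theorem append_singleton_sublist_append_iff_of_notMem {y : α} {l A B : List α} (hy : y ∉ B) :
    l ++ [y] <+ A ++ B ↔ l ++ [y] <+ A := by
  rw [← reverse_sublist, ← reverse_sublist (l₂ := A)]
  simpa using cons_sublist_append_iff_of_notMem (l := l.reverse) (B := A.reverse)
    (by simpa using hy)

theorem pair_sublist_append_iff {x y : α} {A B : List α} :
    [x, y] <+ A ++ B ↔ [x, y] <+ A ∨ (x ∈ A ∧ y ∈ B) ∨ [x, y] <+ B := by
  simp only [sublist_append_iff, cons_eq_append_iff, nil_eq, append_eq_nil_iff, existsAndEq,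
    true_and, or_and_right, exists_or, and_true, nil_sublist, singleton_sublist]
  tauto

theorem triple_sublist_append_iff {x z y : α} {A B : List α} :
    [x, z, y] <+ A ++ B ↔
      [x, z, y] <+ A ∨ (x ∈ A ∧ [z, y] <+ B) ∨ ([x, z] <+ A ∧ y ∈ B) ∨ [x, z, y] <+ B := by
  simp only [sublist_append_iff, cons_eq_append_iff, nil_eq, append_eq_nil_iff, existsAndEq,
    true_and, or_and_right, exists_or, and_true, nil_sublist, singleton_sublist]
  tauto

theorem append_cons_sublist_of_nodup {σ l₁ l₂ : List α} {b : α} (hσ : σ.Nodup)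
    (h₁ : l₁ ++ [b] <+ σ) (h₂ : b :: l₂ <+ σ) : l₁ ++ b :: l₂ <+ σ := by
  obtain ⟨P, Q, rfl⟩ := append_of_mem (h₂.subset mem_cons_self)
  have hbPQ : b ∉ P ++ Q := (nodup_cons.1 (nodup_middle.1 hσ)).1
  have hP : l₁ <+ P := by
    rw [append_cons P, append_singleton_sublist_append_iff_of_notMem
      (fun h => hbPQ (mem_append_right P h))] at h₁
    exact (append_sublist_append_right _).1 h₁
  have hQ : l₂ <+ Q := cons_sublist_cons.1
    ((cons_sublist_append_iff_of_notMem (fun h => hbPQ (mem_append_left Q h))).1 h₂)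
  exact hP.append (hQ.cons_cons b)

end Sublist

section MaxSplit

variable {L R : List ℕ} {m : ℕ}

theorem le_of_mem_append_cons (hL : ∀ a ∈ L, a < m) (hR : ∀ a ∈ R, a ≤ m) :
    ∀ a ∈ L ++ m :: R, a ≤ m := by
  intro a ha
  simp only [mem_append, mem_cons] at ha
  rcases ha with ha | rfl | ha
  exacts [(hL a ha).le, le_rfl, hR a ha]

theorem foldr_max_append_cons (hL : ∀ a ∈ L, a < m) (hR : ∀ a ∈ R, a ≤ m) :
    (L ++ m :: R).foldr max 0 = m :=
  le_antisymm (max_le_of_forall_le _ _ (le_of_mem_append_cons hL hR))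
    (le_max_of_le (by simp) le_rfl)

theorem ssAux_succ_append_cons (fuel : ℕ) (hL : ∀ a ∈ L, a < m) (hR : ∀ a ∈ R, a ≤ m) :
    ssAux (fuel + 1) (L ++ m :: R) = ssAux fuel L ++ ssAux fuel R ++ [m] := by
  have hmL : m ∉ L := fun h => lt_irrefl m (hL m h)
  rw [ssAux.eq_3 _ _ (by simp), foldr_max_append_cons hL hR, idxOf_append_of_notMem hmL,
    idxOf_cons_self]
  simp

end MaxSplit

theorem exists_eq_append_cons_max {σ : List ℕ} (hσ : σ ≠ []) :
    ∃ L m R, σ = L ++ m :: R ∧ (∀ a ∈ L, a < m) ∧ ∀ a ∈ R, a ≤ m := by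
  induction σ with
  | nil => exact absurd rfl hσ
  | cons a t ih =>
    rcases eq_or_ne t [] with rfl | ht
    · exact ⟨[], a, [], rfl, by simp, by simp⟩
    obtain ⟨L, m, R, rfl, hL, hR⟩ := ih ht
    rcases lt_or_ge a m with ham | hma
    · exact ⟨a :: L, m, R, rfl, forall_mem_cons.2 ⟨ham, hL⟩, hR⟩
    · exact ⟨[], a, L ++ m :: R, rfl, by simp,
        fun b hb => (le_of_mem_append_cons hL hR b hb).trans hma⟩

theorem induction_on_max_split {P : List ℕ → Prop} (nil : P [])
    (split : ∀ L m R, (∀ a ∈ L, a < m) → (∀ a ∈ R, a ≤ m) → P L → P R → P (L ++ m :: R))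
    (σ : List ℕ) : P σ := by
  induction hn : σ.length using Nat.strong_induction_on generalizing σ with
  | _ n ih =>
    rcases eq_or_ne σ [] with rfl | hσ
    · exact nil
    obtain ⟨L, m, R, rfl, hL, hR⟩ := exists_eq_append_cons_max hσ
    subst hn
    exact split L m R hL hR (ih _ (by simp) L rfl) (ih _ (by simp; omega) R rfl)

theorem ssAux_of_length_le (σ : List ℕ) {fuel : ℕ} (h : σ.length ≤ fuel) :
    ssAux fuel σ = stackSort σ := by
  induction σ using induction_on_max_split generalizing fuel with
  | nil => cases fuel <;> rfl
  | split L m R hL hR ihL ihR =>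
    have hlen : (L ++ m :: R).length = (L.length + R.length) + 1 := by simp; omega
    obtain ⟨fuel, rfl⟩ : ∃ f, fuel = f + 1 := Nat.exists_eq_add_one.2 (by omega)
    rw [stackSort, hlen, ssAux_succ_append_cons _ hL hR, ssAux_succ_append_cons _ hL hR,
      ihL (by omega), ihR (by omega), ihL (by omega), ihR (by omega)]

theorem stackSort_append_cons {L R : List ℕ} {m : ℕ} (hL : ∀ a ∈ L, a < m) (hR : ∀ a ∈ R, a ≤ m) :
    stackSort (L ++ m :: R) = stackSort L ++ stackSort R ++ [m] := by
  rw [stackSort, show (L ++ m :: R).length = (L.length + R.length) + 1 by simp; omega,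
    ssAux_succ_append_cons _ hL hR, ssAux_of_length_le L (by omega),
    ssAux_of_length_le R (by omega)]

theorem stackSort_perm (σ : List ℕ) : stackSort σ ~ σ := by
  induction σ using induction_on_max_split with
  | nil => rfl
  | split L m R hL hR ihL ihR =>
    rw [stackSort_append_cons hL hR]
    exact ((ihL.append ihR).append_right [m]).trans
      ((perm_append_singleton m _).trans perm_middle.symm)

theorem mem_stackSort {σ : List ℕ} {x : ℕ} : x ∈ stackSort σ ↔ x ∈ σ :=
  (stackSort_perm σ).mem_iff

section Split

variable {L R : List ℕ} {m x y : ℕ}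

theorem pair_sublist_stackSort_append_cons_iff (hL : ∀ a ∈ L, a < m) (hR : ∀ a ∈ R, a ≤ m)
    (hym : y ≠ m) :
    [x, y] <+ stackSort (L ++ m :: R) ↔
      [x, y] <+ stackSort L ∨ (x ∈ L ∧ y ∈ R) ∨ [x, y] <+ stackSort R := by
  rw [stackSort_append_cons hL hR, pair_sublist_append_iff, pair_sublist_append_iff]
  simp [mem_stackSort, hym]

theorem exists_triple_sublist_append_cons_iff (hxm : x < m) (hym : y ≠ m) :
    (∃ z, x < z ∧ [x, z, y] <+ L ++ m :: R) ↔
      (∃ z, x < z ∧ [x, z, y] <+ L) ∨ (x ∈ L ∧ y ∈ R) ∨ ∃ z, x < z ∧ [x, z, y] <+ R := by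
  simp only [triple_sublist_append_iff, sublist_cons_iff, cons.injEq, existsAndEq, and_true,
    singleton_sublist, mem_cons, hym, false_or, hxm.ne, false_and, exists_const, or_false]
  constructor
  · rintro ⟨z, hxz, h | ⟨hxL, h | ⟨-, hyR⟩⟩ | ⟨h, hyR⟩ | h⟩
    · exact .inl ⟨z, hxz, h⟩
    · exact .inr (.inl ⟨hxL, h.subset (by simp)⟩)
    · exact .inr (.inl ⟨hxL, hyR⟩)
    · exact .inr (.inl ⟨h.subset (by simp), hyR⟩)
    · exact .inr (.inr ⟨z, hxz, h⟩)
  · rintro (⟨z, hxz, h⟩ | ⟨hxL, hyR⟩ | ⟨z, hxz, h⟩)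
    exacts [⟨z, hxz, .inl h⟩, ⟨m, hxm, .inr (.inl ⟨hxL, .inr ⟨rfl, hyR⟩⟩)⟩,
      ⟨z, hxz, .inr (.inr (.inr h))⟩]

end Split

theorem pair_sublist_stackSort_iff {σ : List ℕ} (hσ : σ.Nodup) {x y : ℕ} (hyx : y < x) :
    [x, y] <+ stackSort σ ↔ ∃ z, x < z ∧ [x, z, y] <+ σ := by
  induction σ using induction_on_max_split generalizing x y with
  | nil => simp [stackSort, ssAux]
  | split L m R hL hR ihL ihR =>
    have hmR : m ∉ R := (nodup_cons.1 (nodup_middle.1 hσ)).1 ∘ mem_append_right L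
    have hle := le_of_mem_append_cons hL hR
    by_cases hxm : x < m
    · have hym : y ≠ m := (hyx.trans hxm).ne
      rw [pair_sublist_stackSort_append_cons_iff hL hR hym,
        exists_triple_sublist_append_cons_iff hxm hym, ihL hσ.of_append_left hyx,
        ihR hσ.of_append_right.of_cons hyx]
    · refine iff_of_false (fun h => ?_) fun ⟨z, hxz, h⟩ =>
        hxm (hxz.trans_le (hle z (h.subset (by simp))))
      obtain rfl : x = m :=
        le_antisymm (hle x (mem_stackSort.1 (h.subset (by simp)))) (not_lt.1 hxm)
      rcases (pair_sublist_stackSort_append_cons_iff hL hR hyx.ne).1 h with h | ⟨hxL, -⟩ | h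
      · exact lt_irrefl x (hL x (mem_stackSort.1 (h.subset (by simp))))
      · exact lt_irrefl x (hL x hxL)
      · exact hmR (mem_stackSort.1 (h.subset (by simp)))

theorem contains_iff_exists_ofFn_sublist {τ σ : List ℕ} :
    Contains τ σ ↔ ∃ g : Fin τ.length → ℕ, ofFn g <+ σ ∧
      ∀ i j, τ.get i < τ.get j ↔ g i < g j := by
  constructor
  · rintro ⟨f, hf, hord⟩
    refine ⟨fun i => σ.get (f i), sublist_iff_exists_fin_orderEmbedding_get_eq.2
      ⟨(Fin.castOrderIso length_ofFn).toOrderEmbedding.trans (OrderEmbedding.ofStrictMono f hf),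
        fun _ => get_ofFn _ _⟩, hord⟩
  · rintro ⟨g, hs, hord⟩
    obtain ⟨e, he⟩ := sublist_iff_exists_fin_orderEmbedding_get_eq.1 hs
    have hg : ∀ i, g i = σ.get (e (Fin.cast length_ofFn.symm i)) := fun i => by
      simpa using he (Fin.cast length_ofFn.symm i)
    exact ⟨fun i => e (Fin.cast length_ofFn.symm i), e.strictMono.comp (Fin.cast_strictMono _),
      fun i j => by rw [hord, hg, hg]⟩

section Patterns

variable {t : List ℕ}

theorem contains_321_iff :
    Contains [3, 2, 1] t ↔ ∃ a b c, [a, b, c] <+ t ∧ b < a ∧ c < b := by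
  simp [contains_iff_exists_ofFn_sublist, Fin.exists_fin_succ_pi, Fin.forall_fin_succ, ofFn_succ]
  iterate 3 refine exists_congr fun _ => ?_
  exact and_congr_right fun _ => by constructor <;> intro h <;> omega

theorem contains_34251_iff :
    Contains [3, 4, 2, 5, 1] t ↔
      ∃ a z b w c, [a, z, b, w, c] <+ t ∧ c < b ∧ b < a ∧ a < z ∧ z < w := by
  simp [contains_iff_exists_ofFn_sublist, Fin.exists_fin_succ_pi, Fin.forall_fin_succ, ofFn_succ]
  iterate 5 refine exists_congr fun _ => ?_
  exact and_congr_right fun _ => by constructor <;> intro h <;> omega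

theorem contains_35241_iff :
    Contains [3, 5, 2, 4, 1] t ↔
      ∃ a z b w c, [a, z, b, w, c] <+ t ∧ c < b ∧ b < a ∧ a < w ∧ w < z := by
  simp [contains_iff_exists_ofFn_sublist, Fin.exists_fin_succ_pi, Fin.forall_fin_succ, ofFn_succ]
  iterate 5 refine exists_congr fun _ => ?_
  exact and_congr_right fun _ => by constructor <;> intro h <;> omega

theorem contains_45231_iff :
    Contains [4, 5, 2, 3, 1] t ↔
      ∃ a z b w c, [a, z, b, w, c] <+ t ∧ c < b ∧ b < w ∧ w < a ∧ a < z := by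
  simp [contains_iff_exists_ofFn_sublist, Fin.exists_fin_succ_pi, Fin.forall_fin_succ, ofFn_succ]
  iterate 5 refine exists_congr fun _ => ?_
  exact and_congr_right fun _ => by constructor <;> intro h <;> omega

end Patterns

theorem contains_321_stackSort_iff {σ : List ℕ} (hσ : σ.Nodup) :
    Contains [3, 2, 1] (stackSort σ) ↔
      ∃ a z b w c, [a, z, b, w, c] <+ σ ∧ c < b ∧ b < a ∧ a < z ∧ b < w := by
  rw [contains_321_iff]
  constructor
  · rintro ⟨a, b, c, h, hba, hcb⟩
    obtain ⟨z, haz, hz⟩ := (pair_sublist_stackSort_iff hσ hba).1 ((by simp : [a, b] <+ _).trans h)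
    obtain ⟨w, hbw, hw⟩ := (pair_sublist_stackSort_iff hσ hcb).1 ((by simp : [b, c] <+ _).trans h)
    exact ⟨a, z, b, w, c, append_cons_sublist_of_nodup (l₁ := [a, z]) (l₂ := [w, c]) hσ hz hw,
      hcb, hba, haz, hbw⟩
  · rintro ⟨a, z, b, w, c, h, hcb, hba, haz, hbw⟩
    have hab := (pair_sublist_stackSort_iff hσ hba).2 ⟨z, haz, (by simp : [a, z, b] <+ _).trans h⟩
    have hbc := (pair_sublist_stackSort_iff hσ hcb).2 ⟨w, hbw, (by simp : [b, w, c] <+ _).trans h⟩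
    exact ⟨a, b, c, append_cons_sublist_of_nodup (l₁ := [a]) (l₂ := [c])
      ((stackSort_perm σ).nodup_iff.2 hσ) hab hbc, hba, hcb⟩

/-- `s(σ)` avoids 321 iff `σ` avoids 34251, 35241 and 45231:
`s⁻¹(Av(321)) = Av(34251, 35241, 45231)`. -/
theorem stmt4 (n : ℕ) (σ : List ℕ) (hσ : σ.Perm (List.range' 1 n)) :
    Avoids (stackSort σ) [3, 2, 1] ↔
      Avoids σ [3, 4, 2, 5, 1] ∧ Avoids σ [3, 5, 2, 4, 1] ∧ Avoids σ [4, 5, 2, 3, 1] := by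
  have hσ' : σ.Nodup := hσ.nodup_iff.2 (nodup_range' ..)
  simp only [Avoids, ← not_or, not_iff_not]
  rw [contains_321_stackSort_iff hσ', contains_34251_iff, contains_35241_iff, contains_45231_iff]
  simp only [← exists_or, ← and_or_left]
  refine exists_congr fun a => exists_congr fun z => exists_congr fun b => exists_congr fun w =>
    exists_congr fun c => and_congr_right fun h => ?_
  have hnd := hσ'.sublist h
  have hwa : w ≠ a := by rintro rfl; simp at hnd
  have hwz : w ≠ z := by rintro rfl; simp at hnd
  constructor <;> intro <;> omega
end

section
/- A permutation σ satisfies: s(σ) avoids both 132 and 312 if and only if σ avoids the classical patterns 1342, 3142, 3412 and the vincular pattern 342̲1̲. That is, s^{-1}(Av(132,312)) = Av(1342, 3142, 3412, 342̲1̲). -/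
/-- `σ` contains the vincular pattern 342̲1̲: indices `i₁ < i₂ < i₃ < i₄` with `i₄ = i₃ + 1`
and `σ(i₄) < σ(i₃) < σ(i₁) < σ(i₂)`. -/
def Contains3421v (σ : List ℕ) : Prop :=
  ∃ i1 i2 i3 i4 : Fin σ.length, i1 < i2 ∧ i2 < i3 ∧ i3 < i4 ∧ (i4 : ℕ) = (i3 : ℕ) + 1 ∧
    σ.get i4 < σ.get i3 ∧ σ.get i3 < σ.get i1 ∧ σ.get i1 < σ.get i2

/-!
Write `σ = L m R` with `m` maximal, so that `s(σ) = s(L) s(R) m`. A permutation avoids `132` and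
`312` iff each of its entries is a left-to-right maximum or minimum. Since the entries of `s(R)`
are preceded by those of `L`, the induction keeps the values preceding a block as a context set
`C`. Relative to `C`, every entry of `s(σ)` is such a record iff in `σ` every trapped entry (one
lying below a value of `C`, or the `1` of a `231`) is smaller than all entries before it and than
its successor: both properties split along `σ = L m R` in the same way. For `C = ∅` the latter
says that `σ` avoids `1342`, `3142`, `3412` and `342̲1̲`: an earlier entry below the `1` of a `231`
gives one of the three classical patterns, according to its position relative to the `23`, and a
smaller successor gives `342̲1̲`.
-/

namespace StackSorting

open scoped List

section Lists

variable {α : Type*}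

lemma append_cons_eq_append_iff {A B a b : List α} {x : α} :
    A ++ x :: B = a ++ b ↔
      (∃ B₁, a = A ++ x :: B₁ ∧ B = B₁ ++ b) ∨ ∃ A₂, b = A₂ ++ x :: B ∧ A = a ++ A₂ := by
  rw [List.append_eq_append_iff]
  constructor
  · rintro (⟨_ | ⟨y, as⟩, rfl, h⟩ | ⟨bs, rfl, rfl⟩)
    · exact Or.inr ⟨[], by simpa using h.symm, by simp⟩
    · obtain ⟨rfl, rfl⟩ := List.cons_eq_cons.1 h
      exact Or.inl ⟨as, rfl, rfl⟩
    · exact Or.inr ⟨bs, rfl, rfl⟩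
  · rintro (⟨B₁, rfl, rfl⟩ | ⟨A₂, rfl, rfl⟩)
    · exact Or.inl ⟨x :: B₁, rfl, rfl⟩
    · exact Or.inr ⟨A₂, rfl, rfl⟩

lemma concat_sublist_iff {l t : List α} {x : α} :
    l ++ [x] <+ t ↔ ∃ A B, t = A ++ x :: B ∧ l <+ A := by
  constructor
  · intro h
    obtain ⟨r₁, r₂, rfl, h₁, h₂⟩ := List.append_sublist_iff.1 h
    obtain ⟨P, B, rfl⟩ := List.mem_iff_append.1 (List.singleton_sublist.1 h₂)
    exact ⟨r₁ ++ P, B, by simp, h₁.trans (List.sublist_append_left _ _)⟩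
  · rintro ⟨A, B, rfl, h⟩
    exact h.append (List.singleton_sublist.2 List.mem_cons_self)

lemma pair_sublist_append {a b : α} {l₁ l₂ : List α} (h : [a, b] <+ l₁ ++ l₂) :
    a ∈ l₁ ∨ [a, b] <+ l₂ := by
  obtain ⟨k₁, k₂, hk, h₁, h₂⟩ := List.sublist_append_iff.1 h
  rcases k₁ with _ | ⟨c, k₁⟩
  · exact Or.inr (by simpa [hk] using h₂)
  · obtain ⟨rfl, -⟩ := List.cons_eq_cons.1 hk.symm
    exact Or.inl (h₁.subset List.mem_cons_self)

lemma pair_sublist_of_mem {A : List α} {y z : α} (hy : y ∈ A) (hz : z ∈ A)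
    (hyz : y ≠ z) : [y, z] <+ A ∨ [z, y] <+ A := by
  obtain ⟨P, Q, rfl⟩ := List.mem_iff_append.1 hy
  rcases List.mem_append.1 hz with hz | hz
  · exact Or.inr
      ((List.singleton_sublist.2 hz).append (List.singleton_sublist.2 List.mem_cons_self))
  · refine Or.inl ((List.cons_sublist_cons.2 ?_).trans (List.sublist_append_right _ _))
    exact List.singleton_sublist.2 ((List.mem_cons.1 hz).resolve_left hyz.symm)

lemma triple_sublist_of_mem {A : List α} {a y z : α} (ha : a ∈ A)
    (h : [y, z] <+ A) (hay : a ≠ y) (haz : a ≠ z) :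
    [a, y, z] <+ A ∨ [y, a, z] <+ A ∨ [y, z, a] <+ A := by
  obtain ⟨P, Q, rfl⟩ := List.mem_iff_append.1 ha
  obtain ⟨k₁, k₂, hk, h₁, h₂⟩ := List.sublist_append_iff.1 h
  have h₂ : k₂ <+ Q := by
    refine (List.sublist_cons_iff.1 h₂).resolve_right ?_
    rintro ⟨r, rfl, -⟩
    have : a ∈ [y, z] := by rw [hk]; simp
    simp [hay, haz] at this
  rcases k₁ with _ | ⟨_, _ | ⟨_, _ | ⟨_, _⟩⟩⟩ <;> simp only [List.nil_append, List.cons_append,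
    List.cons.injEq, List.nil_eq, reduceCtorEq, and_false] at hk
  · subst hk
    exact Or.inl ((List.cons_sublist_cons.2 h₂).trans (List.sublist_append_right _ _))
  · obtain ⟨rfl, rfl⟩ := hk
    exact Or.inr (Or.inl (h₁.append (List.cons_sublist_cons.2 h₂)))
  · obtain ⟨rfl, rfl, rfl⟩ := hk
    exact Or.inr (Or.inr (h₁.append (List.singleton_sublist.2 List.mem_cons_self)))

lemma pair_getElem_sublist {l : List α} {i j : ℕ} (hij : i < j) (hj : j < l.length) :
    [l[i], l[j]] <+ l := by
  have hi : l[i] ∈ l.take j := List.mem_iff_getElem.2 ⟨i, by simp; omega, by simp⟩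
  have hj' : l[j] ∈ l.drop j := by rw [List.drop_eq_getElem_cons hj]; exact List.mem_cons_self
  simpa using (List.singleton_sublist.2 hi).append (List.singleton_sublist.2 hj')

lemma notMem_of_nodup_append_cons {A B : List α} {x : α} (hnd : (A ++ x :: B).Nodup) : x ∉ A :=
  fun h => (List.nodup_cons.1 (List.nodup_middle.1 hnd)).1 (List.mem_append_left _ h)

lemma forall_mem_union_setOf_mem {C : Set α} {l : List α} {p : α → Prop} :
    (∀ y ∈ C ∪ {y | y ∈ l}, p y) ↔ (∀ y ∈ C, p y) ∧ ∀ y ∈ l, p y :=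
  forall₂_or_left

lemma ofFn_get_comp_sublist {σ : List α} {k : ℕ} {f : Fin k → Fin σ.length} (hf : StrictMono f) :
    List.ofFn (σ.get ∘ f) <+ σ :=
  List.sublist_iff_exists_fin_orderEmbedding_get_eq.2
    ⟨(Fin.castOrderIso List.length_ofFn).toOrderEmbedding.trans
        (OrderEmbedding.ofStrictMono f hf),
      fun _ => by simp; rfl⟩

lemma foldr_max_le [LinearOrder α] {l : List α} {a b : α} (hb : b ≤ a) (h : ∀ x ∈ l, x ≤ a) :
    l.foldr max b ≤ a := by
  induction l <;> simp_all

lemma le_foldr_max [LinearOrder α] {l : List α} {x : α} (b : α) (hx : x ∈ l) :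
    x ≤ l.foldr max b := by
  induction l with
  | nil => simp at hx
  | cons y l ih =>
    rcases List.mem_cons.1 hx with rfl | hx
    · exact le_max_left _ _
    · exact (ih hx).trans (le_max_right _ _)

end Lists

section Records

variable {α : Type*} [LinearOrder α]

def Extreme (S : Set α) (x : α) : Prop := (∀ y ∈ S, y < x) ∨ ∀ y ∈ S, x < y

def AllRecords (C : Set α) (l : List α) : Prop :=
  ∀ A x B, l = A ++ x :: B → Extreme (C ∪ {y | y ∈ A}) x

lemma allRecords_nil (C : Set α) : AllRecords C [] := fun A x B h => by simp at h

lemma allRecords_append {C : Set α} {a b : List α} :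
    AllRecords C (a ++ b) ↔ AllRecords C a ∧ AllRecords (C ∪ {y | y ∈ a}) b := by
  have hset : ∀ A : List α, C ∪ {y | y ∈ a ++ A} = C ∪ {y | y ∈ a} ∪ {y | y ∈ A} := fun A => by
    ext; simp [or_assoc]
  constructor
  · intro H
    refine ⟨fun A x B h => H A x (B ++ b) (by simp [h]), fun A x B h => ?_⟩
    rw [← hset]
    exact H (a ++ A) x B (by simp [h])
  · rintro ⟨Ha, Hb⟩ A x B h
    rcases append_cons_eq_append_iff.1 h.symm with ⟨B₁, ha, -⟩ | ⟨A₂, hb, rfl⟩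
    · exact Ha A x B₁ ha
    · rw [hset]
      exact Hb A₂ x B hb

lemma allRecords_singleton {C : Set α} {x : α} : AllRecords C [x] ↔ Extreme C x := by
  constructor
  · intro H
    simpa using H [] x [] rfl
  · intro H A y B h
    obtain ⟨rfl, rfl, rfl⟩ : A = [] ∧ y = x ∧ B = [] := by
      rcases A with _ | ⟨z, A⟩ <;> simp_all
    simpa using H

def Trapped (C : Set α) (A : List α) (x : α) : Prop :=
  (∃ c ∈ C, x < c) ∨ ∃ y z, [y, z] <+ A ∧ x < y ∧ y < z

def MinimalIfTrapped (C : Set α) (A : List α) (x : α) (B : List α) : Prop :=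
  Trapped C A x → (∀ y ∈ C ∪ {y | y ∈ A}, x < y) ∧ ∀ w ∈ B.head?, x < w

def TrappedAreMinima (C : Set α) (l : List α) : Prop :=
  ∀ A x B, l = A ++ x :: B → MinimalIfTrapped C A x B

lemma trappedAreMinima_nil (C : Set α) : TrappedAreMinima C [] := fun A x B h => by simp at h

section AppendCons

variable {C : Set α} {L R : List α} {m : α}

lemma minimalIfTrapped_append_cons_left {A B : List α} {x : α} (hx : x < m) :
    MinimalIfTrapped C A x (B ++ m :: R) ↔ MinimalIfTrapped C A x B := by
  cases B <;> simp [MinimalIfTrapped, hx]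

lemma minimalIfTrapped_max (hL : ∀ x ∈ L, x < m) (hR : ∀ x ∈ R, x < m) (hmC : m ∉ C) :
    MinimalIfTrapped C L m R ↔ Extreme (C ∪ {y | y ∈ L ++ R}) m := by
  have htrapped : Trapped C L m ↔ ∃ c ∈ C, m < c := by
    unfold Trapped
    refine or_iff_left ?_
    rintro ⟨y, z, h, hmy, -⟩
    exact (hL y (h.subset List.mem_cons_self)).asymm hmy
  have hbelow : (∀ c ∈ C, c < m) ↔ ¬ ∃ c ∈ C, m < c := by
    simp only [not_exists, not_and, not_lt]
    exact forall₂_congr fun c hc => by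
      rw [lt_iff_le_and_ne, and_iff_left (ne_of_mem_of_not_mem hc hmC)]
  have hLnil : (∀ y ∈ L, m < y) ↔ L = [] :=
    ⟨fun h => List.eq_nil_iff_forall_not_mem.2 fun y hy => (h y hy).asymm (hL y hy),
      by rintro rfl; simp⟩
  have hRnil : (∀ y ∈ R, m < y) ↔ R = [] :=
    ⟨fun h => List.eq_nil_iff_forall_not_mem.2 fun y hy => (h y hy).asymm (hR y hy),
      by rintro rfl; simp⟩
  have hhead : (∀ w ∈ R.head?, m < w) ↔ R = [] := by
    cases R with
    | nil => simp
    | cons r R => simpa using (hR r List.mem_cons_self).asymm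
  unfold MinimalIfTrapped Extreme
  simp only [forall_mem_union_setOf_mem, List.forall_mem_append]
  rw [htrapped, hLnil, hRnil, hhead, hbelow,
    and_iff_left (show (∀ x ∈ L, x < m) ∧ ∀ x ∈ R, x < m from ⟨hL, hR⟩), imp_iff_not_or, and_assoc]

lemma trapped_append_cons {A : List α} {x : α} (hL : ∀ y ∈ L, y < m) (hA : ∀ y ∈ A, y < m) :
    Trapped C (L ++ m :: A) x ↔ Trapped (C ∪ {y | y ∈ L}) A x := by
  constructor
  · rintro (⟨c, hc, hxc⟩ | ⟨y, z, h, hxy, hyz⟩)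
    · exact Or.inl ⟨c, Or.inl hc, hxc⟩
    rcases pair_sublist_append h with hy | h
    · exact Or.inl ⟨y, Or.inr hy, hxy⟩
    rcases List.sublist_cons_iff.1 h with h | ⟨r, hr, h⟩
    · exact Or.inr ⟨y, z, h, hxy, hyz⟩
    · obtain ⟨rfl, rfl⟩ := List.cons_eq_cons.1 hr
      exact absurd (hA z (List.singleton_sublist.1 h)) hyz.asymm
  · rintro (⟨c, hc | hc, hxc⟩ | ⟨y, z, h, hxy, hyz⟩)
    · exact Or.inl ⟨c, hc, hxc⟩
    · refine Or.inr ⟨c, m, ?_, hxc, hL c hc⟩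
      exact List.Sublist.append (List.singleton_sublist.2 hc) (by simp)
    · exact Or.inr ⟨y, z, h.trans ((List.sublist_cons_self _ _).trans
        (List.sublist_append_right _ _)), hxy, hyz⟩

lemma minimalIfTrapped_append_cons_right {A B : List α} {x : α} (hL : ∀ y ∈ L, y < m)
    (hA : ∀ y ∈ A, y < m) (hx : x < m) :
    MinimalIfTrapped C (L ++ m :: A) x B ↔ MinimalIfTrapped (C ∪ {y | y ∈ L}) A x B := by
  unfold MinimalIfTrapped
  rw [trapped_append_cons hL hA]
  simp [or_imp, forall_and, hx, or_assoc]

lemma trappedAreMinima_append_cons (hL : ∀ x ∈ L, x < m) (hR : ∀ x ∈ R, x < m) (hmC : m ∉ C) :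
    TrappedAreMinima C (L ++ m :: R) ↔ TrappedAreMinima C L ∧
      TrappedAreMinima (C ∪ {y | y ∈ L}) R ∧ Extreme (C ∪ {y | y ∈ L ++ R}) m := by
  constructor
  · intro H
    refine ⟨fun A x B h => ?_, fun A x B h => ?_, (minimalIfTrapped_max hL hR hmC).1 (H L m R rfl)⟩
    · exact (minimalIfTrapped_append_cons_left (hL x (by simp [h]))).1
        (H A x (B ++ m :: R) (by simp [h]))
    · have hA : ∀ y ∈ A, y < m := fun y hy => hR y (by simp [h, hy])
      exact (minimalIfTrapped_append_cons_right hL hA (hR x (by simp [h]))).1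
        (H (L ++ m :: A) x B (by simp [h]))
  · rintro ⟨HL, HR, hm⟩ A x B h
    rcases append_cons_eq_append_iff.1 h.symm with ⟨B₁, hB₁, rfl⟩ | ⟨_ | ⟨y, A₂⟩, hA₂, rfl⟩
    · exact (minimalIfTrapped_append_cons_left (hL x (by simp [hB₁]))).2 (HL A x B₁ hB₁)
    · obtain ⟨rfl, rfl⟩ := List.cons_eq_cons.1 hA₂
      simpa using (minimalIfTrapped_max hL hR hmC).2 hm
    · obtain ⟨rfl, rfl⟩ := List.cons_eq_cons.1 hA₂
      have hA : ∀ y ∈ A₂, y < m := fun y hy => hR y (by simp [hy])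
      exact (minimalIfTrapped_append_cons_right hL hA (hR x (by simp))).2 (HR A₂ x B rfl)

end AppendCons

end Records

lemma ssAux_append_cons {L R : List ℕ} {m : ℕ} (hL : ∀ x ∈ L, x < m) (hR : ∀ x ∈ R, x < m)
    (n : ℕ) : ssAux (n + 1) (L ++ m :: R) = ssAux n L ++ ssAux n R ++ [m] := by
  have hmax : (L ++ m :: R).foldr max 0 = m := by
    refine le_antisymm (foldr_max_le (Nat.zero_le m) ?_) (le_foldr_max 0 (by simp))
    simpa [or_imp, forall_and] using ⟨fun x hx => (hL x hx).le, fun x hx => (hR x hx).le⟩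
  have hidx : (L ++ m :: R).idxOf m = L.length := by
    rw [List.idxOf_append_of_notMem fun h => (hL m h).false]
    simp
  rw [ssAux, hmax, hidx, List.take_left' rfl] <;> simp

lemma exists_eq_append_cons_max {l : List ℕ} (hl : l ≠ []) (hnd : l.Nodup) :
    ∃ L m R, l = L ++ m :: R ∧ (∀ x ∈ L, x < m) ∧ ∀ x ∈ R, x < m := by
  obtain ⟨m, hm, hmax⟩ := l.toFinset.exists_max_image id (List.toFinset_nonempty_iff l |>.2 hl)
  obtain ⟨L, R, rfl⟩ := List.mem_iff_append.1 (List.mem_toFinset.1 hm)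
  have hm' : m ∉ L ++ R := (List.nodup_cons.1 (List.nodup_middle.1 hnd)).1
  refine ⟨L, m, R, rfl, fun x hx => ?_, fun x hx => ?_⟩ <;>
    refine lt_of_le_of_ne (hmax x (by simp [hx])) fun h => hm' ?_ <;> simp [← h, hx]

lemma ssAux_perm {n : ℕ} {l : List ℕ} (hn : l.length ≤ n) (hnd : l.Nodup) :
    (ssAux n l).Perm l := by
  induction n generalizing l with
  | zero => simp [List.length_eq_zero_iff.1 (Nat.le_zero.1 hn), ssAux]
  | succ n ih =>
    rcases eq_or_ne l [] with rfl | hl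
    · simp [ssAux]
    obtain ⟨L, m, R, rfl, hL, hR⟩ := exists_eq_append_cons_max hl hnd
    have hLR : L.length + R.length ≤ n := by simp at hn; omega
    rw [ssAux_append_cons hL hR, List.append_assoc]
    exact ((ih (by omega) hnd.of_append_left).append
      ((ih (by omega) hnd.of_append_right.of_cons).append_right [m])).trans
      ((List.perm_append_comm.trans List.perm_middle.symm).append_left L)

lemma allRecords_ssAux_iff {n : ℕ} {C : Set ℕ} {l : List ℕ} (hn : l.length ≤ n)
    (hnd : l.Nodup) (hC : ∀ x ∈ l, x ∉ C) :
    AllRecords C (ssAux n l) ↔ TrappedAreMinima C l := by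
  induction n generalizing l C with
  | zero =>
    obtain rfl := List.length_eq_zero_iff.1 (Nat.le_zero.1 hn)
    exact iff_of_true (allRecords_nil C) (trappedAreMinima_nil C)
  | succ n ih =>
    rcases eq_or_ne l [] with rfl | hl
    · exact iff_of_true (allRecords_nil C) (trappedAreMinima_nil C)
    obtain ⟨L, m, R, rfl, hL, hR⟩ := exists_eq_append_cons_max hl hnd
    have hLn : L.length ≤ n := by simp at hn; omega
    have hRn : R.length ≤ n := by simp at hn; omega
    have hndL : L.Nodup := hnd.of_append_left
    have hndR : R.Nodup := hnd.of_append_right.of_cons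
    have hCL : ∀ x ∈ L, x ∉ C := fun x hx => hC x (by simp [hx])
    have hCR : ∀ x ∈ R, x ∉ C ∪ {y | y ∈ L} := fun x hx hx' =>
      hx'.elim (hC x (by simp [hx])) fun hxL =>
        List.disjoint_of_nodup_append hnd hxL (List.mem_cons_of_mem m hx)
    have hsetL : {y | y ∈ ssAux n L} = {y | y ∈ L} :=
      Set.ext fun _ => (ssAux_perm hLn hndL).mem_iff
    have hsetLR : {y | y ∈ ssAux n L ++ ssAux n R} = {y | y ∈ L ++ R} :=
      Set.ext fun _ => ((ssAux_perm hLn hndL).append (ssAux_perm hRn hndR)).mem_iff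
    rw [ssAux_append_cons hL hR, allRecords_append, allRecords_append, allRecords_singleton,
      hsetLR, hsetL, ih hLn hndL hCL, ih hRn hndR hCR,
      trappedAreMinima_append_cons hL hR (hC m (by simp)), and_assoc]

lemma contains_iff_exists_sublist {τ σ : List ℕ} :
    Contains τ σ ↔ ∃ s, s <+ σ ∧ s.length = τ.length ∧
      ∀ i j : Fin τ.length, τ.get i < τ.get j ↔ s.getD i 0 < s.getD j 0 := by
  constructor
  · rintro ⟨f, hf, hord⟩
    exact ⟨List.ofFn (σ.get ∘ f), ofFn_get_comp_sublist hf, List.length_ofFn,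
      fun i j => by simpa using hord i j⟩
  · rintro ⟨s, hs, hlen, hord⟩
    obtain ⟨g, hg⟩ := List.sublist_iff_exists_fin_orderEmbedding_get_eq.1 hs
    refine ⟨fun i => g (Fin.cast hlen.symm i), fun i j hij => g.strictMono hij, fun i j => ?_⟩
    rw [hord, ← hg, ← hg, List.getD_eq_getElem _ _ (by omega), List.getD_eq_getElem _ _ (by omega)]
    rfl

lemma contains_132_iff {σ : List ℕ} :
    Contains [1, 3, 2] σ ↔ ∃ a b c, [a, b, c] <+ σ ∧ a < c ∧ c < b := by
  rw [contains_iff_exists_sublist]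
  constructor
  · rintro ⟨s, hs, hlen, hord⟩
    obtain ⟨a, b, c, rfl⟩ := List.length_eq_three.1 hlen
    exact ⟨a, b, c, hs, (hord 0 2).1 (by decide), (hord 2 1).1 (by decide)⟩
  · rintro ⟨a, b, c, hs, h₁, h₂⟩
    refine ⟨_, hs, rfl, fun i j => ?_⟩
    fin_cases i <;> fin_cases j <;> simp <;> omega

lemma contains_312_iff {σ : List ℕ} :
    Contains [3, 1, 2] σ ↔ ∃ a b c, [a, b, c] <+ σ ∧ b < c ∧ c < a := by
  rw [contains_iff_exists_sublist]
  constructor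
  · rintro ⟨s, hs, hlen, hord⟩
    obtain ⟨a, b, c, rfl⟩ := List.length_eq_three.1 hlen
    exact ⟨a, b, c, hs, (hord 1 2).1 (by decide), (hord 2 0).1 (by decide)⟩
  · rintro ⟨a, b, c, hs, h₁, h₂⟩
    refine ⟨_, hs, rfl, fun i j => ?_⟩
    fin_cases i <;> fin_cases j <;> simp <;> omega

lemma contains_1342_iff {σ : List ℕ} :
    Contains [1, 3, 4, 2] σ ↔ ∃ a b c d, [a, b, c, d] <+ σ ∧ a < d ∧ d < b ∧ b < c := by
  rw [contains_iff_exists_sublist]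
  constructor
  · rintro ⟨s, hs, hlen, hord⟩
    obtain ⟨a, b, c, d, rfl⟩ := List.length_eq_four.1 hlen
    exact ⟨a, b, c, d, hs, (hord 0 3).1 (by decide), (hord 3 1).1 (by decide),
      (hord 1 2).1 (by decide)⟩
  · rintro ⟨a, b, c, d, hs, h₁, h₂, h₃⟩
    refine ⟨_, hs, rfl, fun i j => ?_⟩
    fin_cases i <;> fin_cases j <;> simp <;> omega

lemma contains_3142_iff {σ : List ℕ} :
    Contains [3, 1, 4, 2] σ ↔ ∃ a b c d, [a, b, c, d] <+ σ ∧ b < d ∧ d < a ∧ a < c := by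
  rw [contains_iff_exists_sublist]
  constructor
  · rintro ⟨s, hs, hlen, hord⟩
    obtain ⟨a, b, c, d, rfl⟩ := List.length_eq_four.1 hlen
    exact ⟨a, b, c, d, hs, (hord 1 3).1 (by decide), (hord 3 0).1 (by decide),
      (hord 0 2).1 (by decide)⟩
  · rintro ⟨a, b, c, d, hs, h₁, h₂, h₃⟩
    refine ⟨_, hs, rfl, fun i j => ?_⟩
    fin_cases i <;> fin_cases j <;> simp <;> omega

lemma contains_3412_iff {σ : List ℕ} :
    Contains [3, 4, 1, 2] σ ↔ ∃ a b c d, [a, b, c, d] <+ σ ∧ c < d ∧ d < a ∧ a < b := by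
  rw [contains_iff_exists_sublist]
  constructor
  · rintro ⟨s, hs, hlen, hord⟩
    obtain ⟨a, b, c, d, rfl⟩ := List.length_eq_four.1 hlen
    exact ⟨a, b, c, d, hs, (hord 2 3).1 (by decide), (hord 3 0).1 (by decide),
      (hord 0 1).1 (by decide)⟩
  · rintro ⟨a, b, c, d, hs, h₁, h₂, h₃⟩
    refine ⟨_, hs, rfl, fun i j => ?_⟩
    fin_cases i <;> fin_cases j <;> simp <;> omega

lemma contains3421v_iff {σ : List ℕ} : Contains3421v σ ↔
    ∃ A x w B, σ = A ++ x :: w :: B ∧ ∃ y z, [y, z] <+ A ∧ w < x ∧ x < y ∧ y < z := by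
  constructor
  · rintro ⟨i₁, i₂, i₃, i₄, h₁₂, h₂₃, -, h₄, hwx, hxy, hyz⟩
    have hi₃ : (i₃ : ℕ) + 1 < σ.length := h₄ ▸ i₄.isLt
    refine ⟨σ.take i₃, σ.get i₃, σ.get i₄, σ.drop (i₃ + 2), ?_,
      σ.get i₁, σ.get i₂, ?_, hwx, hxy, hyz⟩
    · simp only [List.get_eq_getElem, h₄]
      rw [← List.drop_eq_getElem_cons hi₃, ← List.drop_eq_getElem_cons, List.take_append_drop]
    · have h := pair_getElem_sublist (l := σ.take i₃) h₁₂ (by simpa using h₂₃)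
      simpa only [List.getElem_take, List.get_eq_getElem] using h
  · rintro ⟨A, x, w, B, rfl, y, z, h, hwx, hxy, hyz⟩
    obtain ⟨g, hg⟩ := List.sublist_iff_exists_fin_orderEmbedding_get_eq.1 h
    have hg₀ := hg 0
    have hg₁ := hg 1
    have hg₀₁ : g 0 < g 1 := g.strictMono (by simp)
    refine ⟨⟨g 0, by simp; omega⟩, ⟨g 1, by simp; omega⟩, ⟨A.length, by simp⟩,
      ⟨A.length + 1, by simp⟩, hg₀₁, by simp [Fin.lt_def], by simp [Fin.lt_def], rfl, ?_, ?_, ?_⟩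
    all_goals simp_all [List.getElem_append_left]

lemma allRecords_empty_iff {t : List ℕ} (hnd : t.Nodup) :
    AllRecords ∅ t ↔ Avoids t [1, 3, 2] ∧ Avoids t [3, 1, 2] := by
  unfold Avoids
  rw [contains_132_iff, contains_312_iff]
  constructor
  · intro H
    have key : ∀ a b c, [a, b, c] <+ t → (a < c ∧ b < c) ∨ (c < a ∧ c < b) := by
      intro a b c h
      obtain ⟨A, B, rfl, hA⟩ := concat_sublist_iff (l := [a, b]).1 h
      have ha : a ∈ ∅ ∪ {y | y ∈ A} := Or.inr (hA.subset (by simp))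
      have hb : b ∈ ∅ ∪ {y | y ∈ A} := Or.inr (hA.subset (by simp))
      rcases H A c B rfl with hlt | hgt
      · exact Or.inl ⟨hlt a ha, hlt b hb⟩
      · exact Or.inr ⟨hgt a ha, hgt b hb⟩
    refine ⟨fun ⟨a, b, c, h, _, _⟩ => ?_, fun ⟨a, b, c, h, _, _⟩ => ?_⟩ <;>
      have := key a b c h <;> omega
  · rintro ⟨h132, h312⟩ A x B rfl
    have hxA := notMem_of_nodup_append_cons hnd
    by_contra hx
    simp only [Extreme, Set.empty_union, not_or, not_forall, not_lt] at hx
    obtain ⟨⟨y, hy, hxy⟩, ⟨z, hz, hzx⟩⟩ := hx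
    replace hxy := lt_of_le_of_ne hxy (ne_of_mem_of_not_mem hy hxA).symm
    replace hzx := lt_of_le_of_ne hzx (ne_of_mem_of_not_mem hz hxA)
    rcases pair_sublist_of_mem hy hz (hzx.trans hxy).ne' with h | h
    · exact h312 ⟨y, z, x, concat_sublist_iff.2 ⟨A, B, rfl, h⟩, hzx, hxy⟩
    · exact h132 ⟨z, y, x, concat_sublist_iff.2 ⟨A, B, rfl, h⟩, hzx, hxy⟩

lemma trappedAreMinima_empty_iff {σ : List ℕ} (hnd : σ.Nodup) :
    TrappedAreMinima ∅ σ ↔ Avoids σ [1, 3, 4, 2] ∧ Avoids σ [3, 1, 4, 2] ∧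
      Avoids σ [3, 4, 1, 2] ∧ ¬ Contains3421v σ := by
  have htrapped : ∀ (A : List ℕ) x, Trapped ∅ A x ↔ ∃ y z, [y, z] <+ A ∧ x < y ∧ y < z := by
    simp [Trapped]
  unfold Avoids
  rw [contains_1342_iff, contains_3142_iff, contains_3412_iff, contains3421v_iff]
  constructor
  · intro H
    have key : ∀ a b c d p q r, [a, b, c, d] <+ σ → [p, q] <+ [a, b, c] → d < p → p < q →
        r ∈ [a, b, c] → r < d → False := by
      intro a b c d p q r h hpq hdp hpq' hr hrd
      obtain ⟨A, B, hσ, hA⟩ := concat_sublist_iff (l := [a, b, c]).1 h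
      have hmin := (H A d B hσ ((htrapped A d).2 ⟨p, q, hpq.trans hA, hdp, hpq'⟩)).1
      exact (hmin r (Or.inr (hA.subset hr))).asymm hrd
    refine ⟨fun ⟨a, b, c, d, h, h₁, h₂, h₃⟩ => key a b c d b c a h (by simp) h₂ h₃ (by simp) h₁,
      fun ⟨a, b, c, d, h, h₁, h₂, h₃⟩ => key a b c d a c b h (by simp) h₂ h₃ (by simp) h₁,
      fun ⟨a, b, c, d, h, h₁, h₂, h₃⟩ => key a b c d a b c h (by simp) h₂ h₃ (by simp) h₁,
      fun ⟨A, x, w, B, hσ, y, z, hyz, hwx, hxy, hyz'⟩ => ?_⟩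
    have hasc := (H A x (w :: B) hσ ((htrapped A x).2 ⟨y, z, hyz, hxy, hyz'⟩)).2
    exact (hasc w rfl).asymm hwx
  · rintro ⟨h1342, h3142, h3412, hv⟩ A x B rfl htr
    obtain ⟨y, z, hyz, hxy, hyz'⟩ := (htrapped A x).1 htr
    refine ⟨fun a ha => ?_, fun w hw => ?_⟩
    · replace ha : a ∈ A := ha.resolve_left id
      have hax : a ≠ x := ne_of_mem_of_not_mem ha (notMem_of_nodup_append_cons hnd)
      refine lt_of_not_ge fun hax' => ?_
      have hax' := lt_of_le_of_ne hax' hax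
      rcases triple_sublist_of_mem ha hyz (by omega) (by omega) with h | h | h
      · exact h1342 ⟨a, y, z, x, concat_sublist_iff.2 ⟨A, B, rfl, h⟩, hax', hxy, hyz'⟩
      · exact h3142 ⟨y, a, z, x, concat_sublist_iff.2 ⟨A, B, rfl, h⟩, hax', hxy, hyz'⟩
      · exact h3412 ⟨y, z, a, x, concat_sublist_iff.2 ⟨A, B, rfl, h⟩, hax', hxy, hyz'⟩
    · obtain ⟨B, rfl⟩ : ∃ B', B = w :: B' := by
        cases B with
        | nil => simp at hw
        | cons w' B' => exact ⟨B', by simpa using hw⟩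
      have hwx : w ≠ x := fun h => (List.nodup_cons.1 hnd.of_append_right).1 (by simp [h])
      exact lt_of_not_ge fun hwx' => hv ⟨A, x, w, B, rfl, y, z, hyz,
        lt_of_le_of_ne hwx' hwx, hxy, hyz'⟩

end StackSorting

/-- `s⁻¹(Av(132,312)) = Av(1342, 3142, 3412, 342̲1̲)`. -/
theorem stmt7 (n : ℕ) (σ : List ℕ) (hσ : σ.Perm (List.range' 1 n)) :
    (Avoids (stackSort σ) [1, 3, 2] ∧ Avoids (stackSort σ) [3, 1, 2]) ↔
      Avoids σ [1, 3, 4, 2] ∧ Avoids σ [3, 1, 4, 2] ∧ Avoids σ [3, 4, 1, 2] ∧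
        ¬ Contains3421v σ := by
  have hnd : σ.Nodup := hσ.nodup_iff.2 List.nodup_range'
  have hsorted : (stackSort σ).Nodup := (StackSorting.ssAux_perm le_rfl hnd).nodup_iff.2 hnd
  rw [← StackSorting.allRecords_empty_iff hsorted, ← StackSorting.trappedAreMinima_empty_iff hnd]
  exact StackSorting.allRecords_ssAux_iff le_rfl hnd fun _ _ => id
end

section
/- A permutation of [n] avoiding all three patterns 231, 312, and 321 is uniquely determined by its descent set, and its descent set must consist of non-adjacent positions; consequently, the number of permutations in S_n avoiding 231, 312, and 321 with exactly k descents is binomial(n−k, k). -/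
/-- The descent set of a list (0-indexed positions `i` with `l_i > l_{i+1}`). -/
def descents (l : List ℕ) : Finset ℕ :=
  (Finset.range (l.length - 1)).filter (fun i => l.getD (i + 1) 0 < l.getD i 0)

/-!
Avoiding 231, 312 and 321 means exactly that any two entries at distance at least two are in
increasing order: the middle entry of a decreasing pair at distance two completes one of the three
patterns. In a permutation this pins each entry to within one of its position (positions are
0-based and values 1-based, so `p ≤ π[p] ≤ p + 2`): the entries two or more places to the left
of `π[p]` are distinct values below it, those two or more places to the right distinct values
above it. Such a permutation is a product of disjoint adjacent transpositions, one at each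
descent, so it is determined by its descent set, which contains no two consecutive positions;
conversely every such set arises. Sparse `k`-subsets of `{0, …, m - 1}` satisfy Pascal's
recursion `f (m + 2) (k + 1) = f (m + 1) (k + 1) + f m k`, according as `m + 1` is omitted or
not, whence `f m k = (m + 1 - k).choose k`.
-/

namespace LayeredPerm

def FarIncreasing (σ : List ℕ) : Prop :=
  ∀ i k (hik : i + 2 ≤ k) (hk : k < σ.length), σ[i] < σ[k]

lemma contains_of_getElem_lt {σ : List ℕ} (hσ : σ.Nodup) {i j k : ℕ} (hij : i < j) (hjk : j < k)
    (hk : k < σ.length) (hki : σ[k] < σ[i]) :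
    Contains [2, 3, 1] σ ∨ Contains [3, 1, 2] σ ∨ Contains [3, 2, 1] σ := by
  have hj : j < σ.length := hjk.trans hk
  have hi : i < σ.length := hij.trans hj
  have hne : σ[i] ≠ σ[j] ∧ σ[j] ≠ σ[k] := by
    simp only [ne_eq, hσ.getElem_inj_iff]; omega
  have hmono : StrictMono ![(⟨i, hi⟩ : Fin σ.length), ⟨j, hj⟩, ⟨k, hk⟩] := by
    refine Fin.strictMono_iff_lt_succ.mpr fun a => ?_
    fin_cases a <;> simpa [Fin.lt_def]
  rcases lt_or_gt_of_ne hne.1 with hij' | hji'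
  · left
    refine ⟨_, hmono, fun a b => ?_⟩
    fin_cases a <;> fin_cases b <;> simp <;> omega
  rcases lt_or_gt_of_ne hne.2 with hjk' | hkj'
  · right; left
    refine ⟨_, hmono, fun a b => ?_⟩
    fin_cases a <;> fin_cases b <;> simp <;> omega
  · right; right
    refine ⟨_, hmono, fun a b => ?_⟩
    fin_cases a <;> fin_cases b <;> simp <;> omega

lemma avoids_of_farIncreasing {σ τ : List ℕ} (hσ : FarIncreasing σ) (hτ : 2 < τ.length)
    (hτ₀ : τ[2] < τ[0]) : Avoids σ τ := by
  rintro ⟨f, hf, hord⟩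
  have h₀₂ : (f ⟨0, by omega⟩ : ℕ) + 2 ≤ f ⟨2, hτ⟩ := by
    have h₀₁ := hf (show (⟨0, by omega⟩ : Fin τ.length) < ⟨1, by omega⟩ by simp [Fin.lt_def])
    have h₁₂ := hf (show (⟨1, by omega⟩ : Fin τ.length) < ⟨2, hτ⟩ by simp [Fin.lt_def])
    rw [Fin.lt_def] at h₀₁ h₁₂
    omega
  have := (hord ⟨2, hτ⟩ ⟨0, by omega⟩).mp hτ₀
  simp only [List.get_eq_getElem] at this
  exact (hσ _ _ h₀₂ _).not_gt this

theorem farIncreasing_iff_avoids {σ : List ℕ} (hσ : σ.Nodup) :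
    FarIncreasing σ ↔ Avoids σ [2, 3, 1] ∧ Avoids σ [3, 1, 2] ∧ Avoids σ [3, 2, 1] := by
  refine ⟨fun h => ⟨avoids_of_farIncreasing h (by simp) (by simp),
    avoids_of_farIncreasing h (by simp) (by simp), avoids_of_farIncreasing h (by simp) (by simp)⟩,
    fun ⟨h₁, h₂, h₃⟩ i k hik hk => ?_⟩
  by_contra hlt
  have hne : σ[i] ≠ σ[k] := by simp only [ne_eq, hσ.getElem_inj_iff]; omega
  have hki : σ[k] < σ[i] := by omega
  rcases contains_of_getElem_lt hσ (Nat.lt_succ_self i) (by omega) hk hki with h | h | h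
  exacts [h₁ h, h₂ h, h₃ h]

def Sparse (S : Finset ℕ) : Prop := ∀ i ∈ S, i + 1 ∉ S

instance : DecidablePred Sparse := fun S => inferInstanceAs (Decidable (∀ i ∈ S, i + 1 ∉ S))

/-- For sparse `S`, the product of the transpositions `(p, p + 1)`, `p ∈ S`. At `p = 0` the
second test repeats the first, as `0 - 1 = 0`. -/
def sparseSwap (S : Finset ℕ) (p : ℕ) : ℕ :=
  if p ∈ S then p + 1 else if p - 1 ∈ S then p - 1 else p

def ofDescents (S : Finset ℕ) (n : ℕ) : List ℕ := (List.range n).map (sparseSwap S · + 1)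

section SparseSwap

variable {S : Finset ℕ}

lemma sparseSwap_le (p : ℕ) : sparseSwap S p ≤ p + 1 := by
  unfold sparseSwap; split_ifs <;> omega

lemma le_sparseSwap (p : ℕ) : p ≤ sparseSwap S p + 1 := by
  unfold sparseSwap; split_ifs <;> omega

lemma sparseSwap_eq_add_one_iff {p : ℕ} : sparseSwap S p = p + 1 ↔ p ∈ S := by
  unfold sparseSwap; split_ifs <;> simp_all

lemma sparseSwap_involutive (hS : Sparse S) : Function.Involutive (sparseSwap S) := by
  intro p
  by_cases hp : p ∈ S
  · have := hS p hp
    simp [sparseSwap, hp, this]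
  by_cases hp' : p - 1 ∈ S
  · have hp0 : p ≠ 0 := by rintro rfl; exact hp hp'
    simp [sparseSwap, hp, hp', Nat.sub_add_cancel (Nat.one_le_iff_ne_zero.mpr hp0)]
  · simp [sparseSwap, hp, hp']

lemma sparseSwap_lt {n : ℕ} (hSn : S ⊆ Finset.range (n - 1)) {p : ℕ} (hp : p < n) :
    sparseSwap S p < n := by
  unfold sparseSwap
  split_ifs with h
  · have := Finset.mem_range.mp (hSn h); omega
  all_goals omega

@[simp] lemma length_ofDescents (S : Finset ℕ) (n : ℕ) : (ofDescents S n).length = n := by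
  simp [ofDescents]

@[simp] lemma getElem_ofDescents (S : Finset ℕ) (n p : ℕ) (hp : p < (ofDescents S n).length) :
    (ofDescents S n)[p] = sparseSwap S p + 1 := by
  simp [ofDescents]

lemma ofDescents_perm {n : ℕ} (hS : Sparse S) (hSn : S ⊆ Finset.range (n - 1)) :
    (ofDescents S n).Perm (List.range' 1 n) := by
  have hswap : ((List.range n).map (sparseSwap S)).Perm (List.range n) := by
    refine (List.perm_ext_iff_of_nodup (List.nodup_range.map (sparseSwap_involutive hS).injective)
      List.nodup_range).mpr fun a => ?_
    simp only [List.mem_map, List.mem_range]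
    exact ⟨fun ⟨p, hp, hpa⟩ => hpa ▸ sparseSwap_lt hSn hp,
      fun ha => ⟨sparseSwap S a, sparseSwap_lt hSn ha, sparseSwap_involutive hS a⟩⟩
  rw [List.range'_eq_map_range, ofDescents]
  simpa [Function.comp_def, add_comm] using hswap.map (· + 1)

lemma farIncreasing_ofDescents {n : ℕ} (hS : Sparse S) (hSn : S ⊆ Finset.range (n - 1)) :
    FarIncreasing (ofDescents S n) := by
  intro i k hik hk
  have hne : (ofDescents S n)[i] ≠ (ofDescents S n)[k] := by
    simp only [ne_eq, ((ofDescents_perm hS hSn).nodup_iff.mpr List.nodup_range').getElem_inj_iff]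
    omega
  simp only [getElem_ofDescents] at hne ⊢
  have := sparseSwap_le (S := S) i
  have := le_sparseSwap (S := S) k
  omega

end SparseSwap

lemma card_le_card_of_getElem_mem {π : List ℕ} (hπ : π.Nodup) {s V : Finset ℕ}
    (h : ∀ q ∈ s, ∃ hq : q < π.length, π[q] ∈ V) : s.card ≤ V.card := by
  refine Finset.card_le_card_of_injOn (fun q => π.getD q 0) (fun q hq => ?_) fun q hq r hr hqr => ?_
  · obtain ⟨hq, hV⟩ := h q hq
    simpa only [Finset.mem_coe, List.getD_eq_getElem _ _ hq] using hV
  · obtain ⟨hq, -⟩ := h q hq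
    obtain ⟨hr, -⟩ := h r hr
    simp only [List.getD_eq_getElem _ _ hq, List.getD_eq_getElem _ _ hr] at hqr
    exact (hπ.getElem_inj_iff).mp hqr

section Perm

variable {n : ℕ} {π : List ℕ} (hπ : π.Perm (List.range' 1 n))
include hπ

lemma length_eq_of_perm : π.length = n := by simpa using hπ.length_eq

lemma nodup_of_perm : π.Nodup := hπ.nodup_iff.mpr List.nodup_range'

lemma getElem_mem_Icc_of_perm (p : ℕ) (hp : p < π.length) : π[p] ∈ Finset.Icc 1 n := by
  have := hπ.mem_iff.mp (List.getElem_mem hp)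
  simp only [List.mem_range'_1] at this
  simp only [Finset.mem_Icc]
  omega

lemma exists_getElem_eq_of_perm {v : ℕ} (hv : v ∈ Finset.Icc 1 n) :
    ∃ q, ∃ hq : q < π.length, π[q] = v := by
  refine List.mem_iff_getElem.mp (hπ.mem_iff.mpr ?_)
  simp only [Finset.mem_Icc] at hv
  simp only [List.mem_range'_1]
  omega

lemma farIncreasing_of_avoids (h₁ : Avoids π [2, 3, 1]) (h₂ : Avoids π [3, 1, 2])
    (h₃ : Avoids π [3, 2, 1]) : FarIncreasing π :=
  (farIncreasing_iff_avoids (nodup_of_perm hπ)).mpr ⟨h₁, h₂, h₃⟩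

variable (hfar : FarIncreasing π)
include hfar

lemma le_getElem (p : ℕ) (hp : p < π.length) : p ≤ π[p] := by
  have hcard : (Finset.range (p - 1)).card ≤ (Finset.Ico 1 π[p]).card := by
    refine card_le_card_of_getElem_mem (nodup_of_perm hπ) fun q hq => ?_
    rw [Finset.mem_range] at hq
    have hmem := getElem_mem_Icc_of_perm hπ q (by omega)
    exact ⟨by omega, Finset.mem_Ico.mpr ⟨(Finset.mem_Icc.mp hmem).1, hfar q p (by omega) hp⟩⟩
  have := getElem_mem_Icc_of_perm hπ p hp
  simp only [Finset.card_range, Nat.card_Ico, Finset.mem_Icc] at hcard this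
  omega

lemma getElem_le_add_two (p : ℕ) (hp : p < π.length) : π[p] ≤ p + 2 := by
  have hlen := length_eq_of_perm hπ
  have hcard : (Finset.Ico (p + 2) n).card ≤ (Finset.Ioc π[p] n).card := by
    refine card_le_card_of_getElem_mem (nodup_of_perm hπ) fun q hq => ?_
    rw [Finset.mem_Ico] at hq
    have hmem := getElem_mem_Icc_of_perm hπ q (by omega)
    exact ⟨by omega, Finset.mem_Ioc.mpr ⟨hfar p q hq.1 _, (Finset.mem_Icc.mp hmem).2⟩⟩
  have := getElem_mem_Icc_of_perm hπ p hp
  simp only [Nat.card_Ico, Nat.card_Ioc, Finset.mem_Icc] at hcard this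
  omega

lemma getElem_succ_eq_of_getElem_eq_add_two (p : ℕ) (hp : p + 1 < π.length)
    (hval : π[p] = p + 2) : π[p + 1] = p + 1 := by
  induction p with
  | zero =>
    obtain ⟨q, hq, hqv⟩ := exists_getElem_eq_of_perm hπ (v := 1)
      (by simp only [Finset.mem_Icc]; rw [← length_eq_of_perm hπ]; omega)
    have := le_getElem hπ hfar q hq
    obtain rfl | rfl : q = 0 ∨ q = 1 := by omega
    exacts [by omega, hqv]
  | succ p ih =>
    obtain ⟨q, hq, hqv⟩ := exists_getElem_eq_of_perm hπ (v := p + 2)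
      (by simp only [Finset.mem_Icc]; rw [← length_eq_of_perm hπ]; omega)
    have := le_getElem hπ hfar q hq
    have := getElem_le_add_two hπ hfar q hq
    obtain rfl | rfl | rfl : q = p ∨ q = p + 1 ∨ q = p + 2 := by omega
    · have := ih (by omega) hqv
      omega
    · omega
    · exact hqv

lemma getElem_eq_add_two_of_getElem_succ_eq (p : ℕ) (hp : p + 1 < π.length)
    (hval : π[p + 1] = p + 1) : π[p] = p + 2 := by
  have hnd := nodup_of_perm hπ
  have hne : π[p] ≠ π[p + 1] := by simp only [ne_eq, hnd.getElem_inj_iff]; omega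
  have := getElem_le_add_two hπ hfar p (by omega)
  have hfix : π[p] ≠ p := by
    intro hfix
    cases p with
    | zero =>
      have := getElem_mem_Icc_of_perm hπ 0 (by omega)
      simp only [Finset.mem_Icc] at this
      omega
    | succ p =>
      have hprev := getElem_eq_add_two_of_getElem_succ_eq p (by omega) hfix
      have : π[p] ≠ π[p + 1 + 1] := by simp only [ne_eq, hnd.getElem_inj_iff]; omega
      omega
  have := le_getElem hπ hfar p (by omega)
  omega

lemma mem_descents_iff (p : ℕ) : p ∈ descents π ↔ ∃ hp : p + 1 < π.length, π[p] = p + 2 := by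
  simp only [descents, Finset.mem_filter, Finset.mem_range]
  constructor
  · rintro ⟨hp, hdesc⟩
    rw [List.getD_eq_getElem _ _ (by omega), List.getD_eq_getElem _ _ (by omega)] at hdesc
    have := getElem_le_add_two hπ hfar p (by omega)
    have := le_getElem hπ hfar (p + 1) (by omega)
    exact ⟨by omega, by omega⟩
  · rintro ⟨hp, hval⟩
    rw [List.getD_eq_getElem _ _ hp, List.getD_eq_getElem _ _ (by omega),
      getElem_succ_eq_of_getElem_eq_add_two hπ hfar p hp hval]
    omega

lemma sparse_descents : Sparse (descents π) := by
  intro i hi hi'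
  obtain ⟨hlt, hval⟩ := (mem_descents_iff hπ hfar i).mp hi
  obtain ⟨_, hval'⟩ := (mem_descents_iff hπ hfar (i + 1)).mp hi'
  have := getElem_succ_eq_of_getElem_eq_add_two hπ hfar i hlt hval
  omega

lemma getElem_eq_sparseSwap_descents (p : ℕ) (hp : p < π.length) :
    π[p] = sparseSwap (descents π) p + 1 := by
  unfold sparseSwap
  split_ifs with hdesc hprev
  · obtain ⟨_, hval⟩ := (mem_descents_iff hπ hfar p).mp hdesc
    exact hval
  · obtain ⟨hlt, hval⟩ := (mem_descents_iff hπ hfar (p - 1)).mp hprev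
    have hp0 : p ≠ 0 := by rintro rfl; exact hdesc hprev
    have := getElem_succ_eq_of_getElem_eq_add_two hπ hfar (p - 1) hlt hval
    simp only [Nat.sub_add_cancel (Nat.one_le_iff_ne_zero.mpr hp0)] at this
    omega
  · have hlen := length_eq_of_perm hπ
    have hmem := getElem_mem_Icc_of_perm hπ p hp
    have := le_getElem hπ hfar p hp
    have := getElem_le_add_two hπ hfar p hp
    simp only [Finset.mem_Icc] at hmem
    have hmax : π[p] ≠ p + 2 := fun h => hdesc ((mem_descents_iff hπ hfar p).mpr ⟨by omega, h⟩)
    have hfix : π[p] ≠ p := by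
      intro h
      obtain ⟨q, rfl⟩ : ∃ q, p = q + 1 := ⟨p - 1, by omega⟩
      exact hprev ((mem_descents_iff hπ hfar q).mpr
        ⟨hp, getElem_eq_add_two_of_getElem_succ_eq hπ hfar q hp h⟩)
    omega

lemma eq_ofDescents : π = ofDescents (descents π) n :=
  List.ext_getElem (by simp [length_eq_of_perm hπ]) fun p hp _ => by
    rw [getElem_ofDescents, getElem_eq_sparseSwap_descents hπ hfar p hp]

end Perm

lemma descents_ofDescents {S : Finset ℕ} {n : ℕ} (hS : Sparse S)
    (hSn : S ⊆ Finset.range (n - 1)) : descents (ofDescents S n) = S := by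
  ext p
  rw [mem_descents_iff (ofDescents_perm hS hSn) (farIncreasing_ofDescents hS hSn)]
  simp only [length_ofDescents, getElem_ofDescents, add_left_inj, sparseSwap_eq_add_one_iff]
  exact ⟨fun ⟨_, h⟩ => h, fun h => ⟨by have := Finset.mem_range.mp (hSn h); omega, h⟩⟩

def sparseSubsets (m k : ℕ) : Finset (Finset ℕ) :=
  ((Finset.range m).powersetCard k).filter Sparse

lemma mem_sparseSubsets {m k : ℕ} {S : Finset ℕ} :
    S ∈ sparseSubsets m k ↔ S ⊆ Finset.range m ∧ S.card = k ∧ Sparse S := by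
  simp [sparseSubsets, Finset.mem_powersetCard, and_assoc]

lemma sparseSubsets_zero_right (m : ℕ) : sparseSubsets m 0 = {∅} := by
  ext S
  simp only [mem_sparseSubsets, Finset.card_eq_zero, Finset.mem_singleton]
  constructor
  · exact fun h => h.2.1
  · rintro rfl
    exact ⟨Finset.empty_subset _, rfl, fun i hi => absurd hi (Finset.notMem_empty i)⟩

lemma sparseSubsets_eq_empty {m k : ℕ} (h : m < k) : sparseSubsets m k = ∅ := by
  rw [sparseSubsets, Finset.powersetCard_eq_empty.mpr (by simpa using h), Finset.filter_empty]

lemma filter_not_mem_sparseSubsets (m k : ℕ) :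
    (sparseSubsets (m + 1) k).filter (m ∉ ·) = sparseSubsets m k := by
  ext S
  simp only [Finset.mem_filter, mem_sparseSubsets, Finset.subset_iff, Finset.mem_range]
  constructor
  · rintro ⟨⟨hsub, hcard, hS⟩, hm⟩
    exact ⟨fun x hx => lt_of_le_of_ne (Nat.lt_succ_iff.mp (hsub hx)) (by rintro rfl; exact hm hx),
      hcard, hS⟩
  · rintro ⟨hsub, hcard, hS⟩
    exact ⟨⟨fun x hx => (hsub hx).trans (Nat.lt_succ_self m), hcard, hS⟩,
      fun hm => (hsub hm).false⟩

lemma filter_mem_sparseSubsets (m k : ℕ) :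
    (sparseSubsets (m + 2) (k + 1)).filter (m + 1 ∈ ·) =
      (sparseSubsets m k).image (insert (m + 1)) := by
  ext S
  simp only [Finset.mem_filter, Finset.mem_image, mem_sparseSubsets]
  constructor
  · rintro ⟨⟨hsub, hcard, hS⟩, hm⟩
    refine ⟨S.erase (m + 1), ⟨fun x hx => ?_, by simp [Finset.card_erase_of_mem hm, hcard],
      fun i hi hi' => hS i (Finset.mem_of_mem_erase hi) (Finset.mem_of_mem_erase hi')⟩,
      Finset.insert_erase hm⟩
    obtain ⟨hxm, hxS⟩ := Finset.mem_erase.mp hx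
    have := Finset.mem_range.mp (hsub hxS)
    have : x ≠ m := by rintro rfl; exact hS x hxS hm
    exact Finset.mem_range.mpr (by omega)
  · rintro ⟨T, ⟨hsub, hcard, hT⟩, rfl⟩
    have hmT : ∀ x ∈ T, x < m := fun x hx => Finset.mem_range.mp (hsub hx)
    refine ⟨⟨?_, ?_, ?_⟩, Finset.mem_insert_self _ _⟩
    · intro x hx
      rcases Finset.mem_insert.mp hx with rfl | hx
      · simp
      · simpa using (hmT x hx).trans (by omega : m < m + 2)
    · rw [Finset.card_insert_of_notMem (fun h => absurd (hmT _ h) (by omega)), hcard]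
    · intro i hi hi'
      rcases Finset.mem_insert.mp hi with rfl | hi <;> rcases Finset.mem_insert.mp hi' with h | hi'
      · omega
      · exact absurd (hmT _ hi') (by omega)
      · exact absurd (hmT _ hi) (by omega)
      · exact hT i hi hi'

lemma card_sparseSubsets_add_two (m k : ℕ) :
    (sparseSubsets (m + 2) (k + 1)).card =
      (sparseSubsets (m + 1) (k + 1)).card + (sparseSubsets m k).card := by
  have hinj : Set.InjOn (insert (m + 1)) (sparseSubsets m k : Set (Finset ℕ)) := by
    intro T hT U hU h
    have hm : ∀ V ∈ sparseSubsets m k, m + 1 ∉ V := fun V hV hmV =>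
      by simpa using (mem_sparseSubsets.mp hV).1 hmV
    rw [← Finset.erase_insert (hm T hT), h, Finset.erase_insert (hm U hU)]
  rw [← Finset.card_filter_add_card_filter_not (p := (m + 1 ∈ ·)),
    filter_mem_sparseSubsets, Finset.card_image_of_injOn hinj, filter_not_mem_sparseSubsets,
    add_comm]

theorem card_sparseSubsets (m k : ℕ) : (sparseSubsets m k).card = (m + 1 - k).choose k := by
  induction m using Nat.strong_induction_on generalizing k with
  | _ m ih =>
    match m, k with
    | _, 0 => simp [sparseSubsets_zero_right]
    | 0, k + 1 => simp [sparseSubsets_eq_empty]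
    | 1, 1 => decide
    | 1, k + 2 => simp [sparseSubsets_eq_empty]
    | m + 2, k + 1 =>
      rw [card_sparseSubsets_add_two, ih (m + 1) (by omega), ih m (by omega)]
      rcases Nat.lt_or_ge (m + 1) k with hlt | hle
      · simp only [Nat.choose_eq_zero_iff.mpr (show m + 2 + 1 - (k + 1) < k + 1 by omega),
          Nat.choose_eq_zero_iff.mpr (show m + 1 + 1 - (k + 1) < k + 1 by omega),
          Nat.choose_eq_zero_iff.mpr (show m + 1 - k < k by omega)]
      · rw [show m + 2 + 1 - (k + 1) = (m + 1 - k) + 1 by omega, Nat.choose_succ_succ',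
          show m + 1 + 1 - (k + 1) = m + 1 - k by omega, add_comm]

lemma card_sparseSubsets_pred (n k : ℕ) : (sparseSubsets (n - 1) k).card = (n - k).choose k := by
  rw [card_sparseSubsets]
  rcases k with _ | k
  · simp
  · rw [show n - 1 + 1 - (k + 1) = n - (k + 1) by omega]

lemma descents_subset_range {n : ℕ} {π : List ℕ} (hπ : π.Perm (List.range' 1 n)) :
    descents π ⊆ Finset.range (n - 1) := by
  rw [descents, length_eq_of_perm hπ]
  exact Finset.filter_subset _ _

lemma mem_image_ofDescents_sparseSubsets {n k : ℕ} {π : List ℕ} :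
    π ∈ (sparseSubsets (n - 1) k).image (ofDescents · n) ↔
      π.Perm (List.range' 1 n) ∧ Avoids π [2, 3, 1] ∧ Avoids π [3, 1, 2] ∧ Avoids π [3, 2, 1] ∧
        (descents π).card = k := by
  simp only [Finset.mem_image, mem_sparseSubsets]
  constructor
  · rintro ⟨S, ⟨hSn, rfl, hS⟩, rfl⟩
    have hperm := ofDescents_perm hS hSn
    have ⟨h₁, h₂, h₃⟩ := (farIncreasing_iff_avoids (nodup_of_perm hperm)).mp
      (farIncreasing_ofDescents hS hSn)
    exact ⟨hperm, h₁, h₂, h₃, by rw [descents_ofDescents hS hSn]⟩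
  · rintro ⟨hπ, h₁, h₂, h₃, rfl⟩
    have hfar := farIncreasing_of_avoids hπ h₁ h₂ h₃
    exact ⟨descents π, ⟨descents_subset_range hπ, rfl, sparse_descents hπ hfar⟩,
      (eq_ofDescents hπ hfar).symm⟩

lemma injOn_ofDescents (n k : ℕ) :
    Set.InjOn (ofDescents · n) (sparseSubsets (n - 1) k : Set (Finset ℕ)) := by
  intro S hS T hT hST
  obtain ⟨hSn, -, hS⟩ := mem_sparseSubsets.mp hS
  obtain ⟨hTn, -, hT⟩ := mem_sparseSubsets.mp hT
  rw [← descents_ofDescents hS hSn, ← descents_ofDescents hT hTn]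
  exact congrArg descents hST

end LayeredPerm

/-- A permutation of `[n]` avoiding 231, 312 and 321 is determined by its descent set,
its descent set has no two adjacent positions, and the number of such permutations with
exactly `k` descents is `(n-k).choose k`. -/
theorem stmt11 (n k : ℕ) :
    (∀ π π' : List ℕ, π.Perm (List.range' 1 n) → π'.Perm (List.range' 1 n) →
      Avoids π [2, 3, 1] → Avoids π [3, 1, 2] → Avoids π [3, 2, 1] →
      Avoids π' [2, 3, 1] → Avoids π' [3, 1, 2] → Avoids π' [3, 2, 1] →
      descents π = descents π' → π = π') ∧
    (∀ π : List ℕ, π.Perm (List.range' 1 n) →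
      Avoids π [2, 3, 1] → Avoids π [3, 1, 2] → Avoids π [3, 2, 1] →
      ∀ i ∈ descents π, i + 1 ∉ descents π) ∧
    Nat.card {π : List ℕ // π.Perm (List.range' 1 n) ∧
      Avoids π [2, 3, 1] ∧ Avoids π [3, 1, 2] ∧ Avoids π [3, 2, 1] ∧
      (descents π).card = k} = (n - k).choose k := by
  refine ⟨fun π π' hπ hπ' h₁ h₂ h₃ h₁' h₂' h₃' hdesc => ?_, fun π hπ h₁ h₂ h₃ => ?_, ?_⟩
  · rw [LayeredPerm.eq_ofDescents hπ (LayeredPerm.farIncreasing_of_avoids hπ h₁ h₂ h₃),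
      LayeredPerm.eq_ofDescents hπ' (LayeredPerm.farIncreasing_of_avoids hπ' h₁' h₂' h₃'), hdesc]
  · exact LayeredPerm.sparse_descents hπ (LayeredPerm.farIncreasing_of_avoids hπ h₁ h₂ h₃)
  · rw [← Nat.card_congr (Equiv.subtypeEquivRight
        fun π => LayeredPerm.mem_image_ofDescents_sparseSubsets), Nat.card_eq_finsetCard,
      Finset.card_image_of_injOn (LayeredPerm.injOn_ofDescents n k),
      LayeredPerm.card_sparseSubsets_pred]
end

section
/- The formal power series G(x) = 1/(1 − x·C(x·C(x))), where C is the Catalan generating function, satisfies the polynomial equation Q(G, x) = 0 where Q(a,x) = 1 − 3a + (3+2x)a² + (−1−4x+2x²)a³ + (2x−2x²+x³)a⁴. -/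
/-!
Put `u = x·C` and `t = x·D`. The Catalan equation becomes `u² - u + x = 0`, and `x²` times the
equation for `D` becomes `u·t² - x·t + x² = 0`; substituting `x = u - u²` and cancelling `u`
leaves a relation linear in `u`. Its resultant with `u² - u + x` is a quartic `P(t, x) = 0`, and
since `G = 1/(1 - t)`, the polynomial `Q(a, x)` is the reversal `a⁴·P(1 - 1/a, x)`.
-/

section Elimination

variable {R : Type*} [CommRing R]

theorem mul_sq_sub_mul_add_eq_zero_of_catalan {x C : R} (hC : x * C ^ 2 + 1 - C = 0) :
    (x * C) ^ 2 - x * C + x = 0 := by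
  linear_combination x * hC

theorem linear_relation_of_catalan_compose [IsDomain R] {x u t : R} (hu : u ≠ 0)
    (hux : u ^ 2 - u + x = 0) (hut : u * t ^ 2 - x * t + x ^ 2 = 0) :
    (t - x) * u + (t ^ 2 - t + x) = 0 := by
  have hmul : u * ((t - x) * u + (t ^ 2 - t + x)) = 0 := by
    linear_combination hut + (t - x) * hux
  exact (mul_eq_zero.mp hmul).resolve_left hu

/-- The resultant in `u` of `u² - u + x` and `(t - x)·u + (t² - t + x)`. -/
theorem quartic_of_resultant {x u t : R} (hux : u ^ 2 - u + x = 0)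
    (hlin : (t - x) * u + (t ^ 2 - t + x) = 0) :
    t ^ 4 - t ^ 3 + 2 * x * t ^ 2 - 2 * x ^ 2 * t + x ^ 3 = 0 := by
  linear_combination (t - x) ^ 2 * hux + ((t ^ 2 - t + x) - (t - x) * u + (t - x)) * hlin

theorem quartic_catalan_compose [IsDomain R] {x C D : R} (hx : x ≠ 0)
    (hC : x * C ^ 2 + 1 - C = 0) (hD : x * C * D ^ 2 + 1 - D = 0) :
    (x * D) ^ 4 - (x * D) ^ 3 + 2 * x * (x * D) ^ 2 - 2 * x ^ 2 * (x * D) + x ^ 3 = 0 := by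
  have hC0 : C ≠ 0 := by
    rintro rfl
    simp at hC
  have hux := mul_sq_sub_mul_add_eq_zero_of_catalan hC
  have hut : x * C * (x * D) ^ 2 - x * (x * D) + x ^ 2 = 0 := by
    linear_combination x ^ 2 * hD
  exact quartic_of_resultant hux
    (linear_relation_of_catalan_compose (mul_ne_zero hx hC0) hux hut)

theorem reversed_quartic_of_mul_one_sub_eq_one {x t G : R}
    (hP : t ^ 4 - t ^ 3 + 2 * x * t ^ 2 - 2 * x ^ 2 * t + x ^ 3 = 0) (hG : G * (1 - t) = 1) :
    1 - 3 * G + (3 + 2 * x) * G ^ 2 + (-1 - 4 * x + 2 * x ^ 2) * G ^ 3 +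
      (2 * x - 2 * x ^ 2 + x ^ 3) * G ^ 4 = 0 := by
  linear_combination G ^ 4 * hP +
    (-1 + 2 * G - G ^ 2 + t * G - t * G ^ 2 - t ^ 2 * G ^ 2 + t ^ 3 * G ^ 3
      - 2 * x * G ^ 2 + 2 * x * G ^ 3 + 2 * x * t * G ^ 3 - 2 * x ^ 2 * G ^ 3) * hG

end Elimination

/-- The power series `G = 1/(1 - x·C(x·C(x)))` satisfies `Q(G, x) = 0` where
`Q(a,x) = 1 - 3a + (3+2x)a² + (-1-4x+2x²)a³ + (2x-2x²+x³)a⁴`: here `C` is the Catalan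
generating function (characterized by `xC² + 1 - C = 0`), `D = C(xC(x))` (characterized by
`(xC)·D² + 1 - D = 0`), and `G` is characterized by `G·(1 - x·D) = 1`. -/
theorem stmt16 (C D G : PowerSeries ℚ)
    (hC : PowerSeries.X * C ^ 2 + 1 - C = 0)
    (hD : PowerSeries.X * C * D ^ 2 + 1 - D = 0)
    (hG : G * (1 - PowerSeries.X * D) = 1) :
    1 - 3 * G + (3 + 2 * PowerSeries.X) * G ^ 2 +
      (-1 - 4 * PowerSeries.X + 2 * PowerSeries.X ^ 2) * G ^ 3 +
      (2 * PowerSeries.X - 2 * PowerSeries.X ^ 2 + PowerSeries.X ^ 3) * G ^ 4 = 0 :=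
  reversed_quartic_of_mul_one_sub_eq_one
    (quartic_catalan_compose PowerSeries.X_ne_zero hC hD) hG
end

section
/- Define Y(x) = (3x + 2x² − x√(1−4x−4x²)) / (2(1+x)²) as a formal power series. Then Y satisfies the kernel equation x·Y·(C(Y) − 1) − Y + x = 0, where C is the Catalan generating function. -/
/-!
Put `A = Y(1 + X) - X`. The defining equation of `Y` says `2(1 + X)A = X(1 - S)`; squaring and
using `S² = 1 - 4X - 4X²` gives `A² = X(Y - X)`. Together with `YW² + 1 - W = 0` this factors
`K·U = 0`, where `K = XY(W - 1) - Y + X` is the kernel and `U = XYW + Y(1 + X) - 2X` a cofactor.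
Since `S(0) = 1`, `Y = X + O(X²)`, so `U = -X + O(X²) ≠ 0`, and `K = 0` in the domain `ℚ⟦X⟧`.
-/

open PowerSeries

section KernelEquation

variable {R : Type*} [CommRing R] {x s y w : R}

theorem two_mul_one_add_sq_mul_kernel_mul_cofactor_eq_zero (hs : s ^ 2 = 1 - 4 * x - 4 * x ^ 2)
    (hy : 2 * (1 + x) ^ 2 * y = 3 * x + 2 * x ^ 2 - x * s)
    (hw : y * w ^ 2 + 1 - w = 0) :
    (2 * (1 + x)) ^ 2 * ((x * y * (w - 1) - y + x) * (x * y * w + y * (1 + x) - 2 * x)) = 0 := by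
  linear_combination -(x ^ 2) * hs - (2 * (1 + x) ^ 2 * y - 3 * x - 2 * x ^ 2 - x * s) * hy
    + 4 * (1 + x) ^ 2 * x ^ 2 * y * hw

theorem kernel_eq_zero_of_cofactor_ne_zero [IsDomain R] (hs : s ^ 2 = 1 - 4 * x - 4 * x ^ 2)
    (hy : 2 * (1 + x) ^ 2 * y = 3 * x + 2 * x ^ 2 - x * s)
    (hw : y * w ^ 2 + 1 - w = 0) (h2 : 2 * (1 + x) ≠ 0)
    (hU : x * y * w + y * (1 + x) - 2 * x ≠ 0) :
    x * y * (w - 1) - y + x = 0 := by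
  simpa [h2, hU] using two_mul_one_add_sq_mul_kernel_mul_cofactor_eq_zero hs hy hw

end KernelEquation

theorem exists_eq_X_mul_of_two_mul_one_add_X_sq_mul_eq {K : Type*} [Field K] [NeZero (2 : K)]
    {S Y : K⟦X⟧} (hS : constantCoeff S = 1)
    (hY : 2 * (1 + X) ^ 2 * Y = 3 * X + 2 * X ^ 2 - X * S) :
    ∃ Z, Y = X * Z ∧ constantCoeff Z = 1 := by
  have hY0 : constantCoeff Y = 0 := by
    simpa [map_ofNat, two_ne_zero] using congrArg constantCoeff hY
  obtain ⟨Z, rfl⟩ := X_dvd_iff.mpr hY0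
  have hZ : 2 * (1 + X) ^ 2 * Z = 3 + 2 * X - S :=
    mul_left_cancel₀ X_ne_zero (by linear_combination hY)
  refine ⟨Z, rfl, ?_⟩
  have h := congrArg constantCoeff hZ
  simp only [map_mul, map_sub, map_add, map_pow, map_ofNat, map_one, constantCoeff_X, hS] at h
  exact mul_left_cancel₀ two_ne_zero (by linear_combination h)

theorem cofactor_ne_zero_of_constantCoeff_eq_one {R : Type*} [CommRing R]
    [Nontrivial R] {Z W : R⟦X⟧} (hZ : constantCoeff Z = 1) :
    X * (X * Z) * W + X * Z * (1 + X) - 2 * X ≠ 0 := by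
  have hU : X * (X * Z) * W + X * Z * (1 + X) - 2 * X = X * (X * Z * W + Z * (1 + X) - 2) := by
    ring
  intro h
  have h1 := congrArg (coeff 1) (hU ▸ h)
  norm_num [coeff_succ_X_mul, hZ, map_ofNat] at h1

/-- With `S = √(1-4x-4x²)` (the power series square root with constant term 1),
`Y = (3x + 2x² - xS)/(2(1+x)²)`, and `W = C(Y)` where `C` is the Catalan generating
function (so `W` is characterized by `Y·W² + 1 - W = 0`), the kernel equation
`x·Y·(C(Y) - 1) - Y + x = 0` holds. -/
theorem stmt17 (S Y W : PowerSeries ℚ)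
    (hS2 : S ^ 2 = 1 - 4 * PowerSeries.X - 4 * PowerSeries.X ^ 2)
    (hS0 : PowerSeries.constantCoeff S = 1)
    (hY : 2 * (1 + PowerSeries.X) ^ 2 * Y
        = 3 * PowerSeries.X + 2 * PowerSeries.X ^ 2 - PowerSeries.X * S)
    (hW : Y * W ^ 2 + 1 - W = 0) :
    PowerSeries.X * Y * (W - 1) - Y + PowerSeries.X = 0 := by
  obtain ⟨Z, rfl, hZ⟩ := exists_eq_X_mul_of_two_mul_one_add_X_sq_mul_eq hS0 hY
  have h2 : (2 * (1 + X) : ℚ⟦X⟧) ≠ 0 := fun h => by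
    simpa [map_ofNat] using congrArg constantCoeff h
  exact kernel_eq_zero_of_cofactor_ne_zero hS2 hY hW h2 (cofactor_ne_zero_of_constantCoeff_eq_one hZ)
end
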